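/- arXiv:0801.2461 — 3 statements merged into one kernel-verified Lean document; each statement's English description precedes it below -/
import Mathlib

section
/- Let $V_1, V_2$ be finite sets with $V_1 \cap V_2 = O_1 = I_2$, and let $U_1 = \frac{1}{C_1}\sum_{x \in \{0,1\}^{V_1}} e^{iQ_1(x)} |x_{O_1}\rangle\langle x_{I_1}|$ and $U_2 = \frac{1}{C_2}\sum_{x \in \{0,1\}^{V_2}} e^{iQ_2(x)} |x_{O_2}\rangle\langle x_{I_2}|$ be matrices given by quadratic form expansions. Then the product satisfies $U_2 U_1 = \frac{1}{C_1 C_2} \sum_{x \in \{0,1\}^{V_1 \cup V_2}} e^{i Q_1(x_{V_1}) + i Q_2(x_{V_2})} |x_{O_2}\rangle\langle x_{I_1}|$. -/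
/-! Expanding both matrices as sums of matrix units `|x_O⟩⟨x_I|`, the product of the units for
`x₂ ∈ {0,1}^{V₂}` and `x₁ ∈ {0,1}^{V₁}` vanishes unless `x₂` and `x₁` agree on `M = V₁ ∩ V₂`, and
pairs of bit strings agreeing on the overlap are the same as bit strings on `V₁ ∪ V₂`. -/

/-- Restriction of a bit string on `B` to a subset `A ⊆ B`. -/
def bres {V : Type} [DecidableEq V] {A B : Finset V} (h : A ⊆ B)
    (x : {v // v ∈ B} → Bool) : {v // v ∈ A} → Bool :=
  fun a => x ⟨a.1, h a.2⟩

/-- The quadratic form expansion `(1/C) ∑_{x ∈ {0,1}^W} e^{i Q(x)} |x_O⟩⟨x_I|`. -/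
noncomputable def qfe {V : Type} [DecidableEq V] {W I O : Finset V}
    (hI : I ⊆ W) (hO : O ⊆ W) (C : ℂ) (Q : ({v // v ∈ W} → Bool) → ℝ) :
    Matrix ({v // v ∈ O} → Bool) ({v // v ∈ I} → Bool) ℂ :=
  Matrix.of fun y z => (1 / C) * ∑ x : {v // v ∈ W} → Bool,
    if bres hO x = y ∧ bres hI x = z then Complex.exp (Complex.I * (Q x : ℝ)) else 0

theorem Matrix.single_mul_single_eq_ite {l m n α : Type*} [Fintype m] [DecidableEq l]
    [DecidableEq m] [DecidableEq n] [NonUnitalNonAssocSemiring α] (i : l) (j k : m) (o : n)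
    (c d : α) :
    Matrix.single i j c * Matrix.single k o d =
      if j = k then Matrix.single i o (c * d) else 0 := by
  split_ifs with h
  · subst h
    exact Matrix.single_mul_single_same (c := c) i j o d
  · exact Matrix.single_mul_single_of_ne (c := c) i j k h d

section BitStrings

variable {V : Type} [DecidableEq V]

theorem bres_bres {A B C : Finset V} (hAB : A ⊆ B) (hBC : B ⊆ C) (x : {v // v ∈ C} → Bool) :
    bres hAB (bres hBC x) = bres (hAB.trans hBC) x :=
  rfl

theorem qfe_eq_sum_single {W I O : Finset V} (hI : I ⊆ W) (hO : O ⊆ W) (C : ℂ)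
    (Q : ({v // v ∈ W} → Bool) → ℝ) :
    qfe hI hO C Q = C⁻¹ • ∑ x, Matrix.single (bres hO x) (bres hI x)
      (Complex.exp (Complex.I * (Q x : ℝ))) := by
  ext y z
  simp [qfe, Matrix.sum_apply, Matrix.single_apply]

variable {V1 V2 M : Finset V}

def glue (x1 : {v // v ∈ V1} → Bool) (x2 : {v // v ∈ V2} → Bool) :
    {v // v ∈ V1 ∪ V2} → Bool :=
  fun v => if h : v.1 ∈ V1 then x1 ⟨v.1, h⟩
    else x2 ⟨v.1, (Finset.mem_union.mp v.2).resolve_left h⟩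

theorem bres_glue_left (x1 : {v // v ∈ V1} → Bool) (x2 : {v // v ∈ V2} → Bool) :
    bres Finset.subset_union_left (glue x1 x2) = x1 := by
  funext a
  simp [bres, glue, a.2]

theorem bres_glue_right (hM : V1 ∩ V2 ⊆ M) (hM1 : M ⊆ V1) (hM2 : M ⊆ V2)
    {x1 : {v // v ∈ V1} → Bool} {x2 : {v // v ∈ V2} → Bool}
    (hagree : bres hM1 x1 = bres hM2 x2) :
    bres Finset.subset_union_right (glue x1 x2) = x2 := by
  funext a
  simp only [bres, glue]
  split_ifs with h
  · exact congrFun hagree ⟨a.1, hM (Finset.mem_inter.mpr ⟨h, a.2⟩)⟩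
  · rfl

theorem glue_bres (x : {v // v ∈ V1 ∪ V2} → Bool) :
    glue (bres Finset.subset_union_left x) (bres Finset.subset_union_right x) = x := by
  funext a
  simp only [glue, bres]
  split_ifs <;> rfl

def glueEquiv (hM : V1 ∩ V2 ⊆ M) (hM1 : M ⊆ V1) (hM2 : M ⊆ V2) :
    {p : ({v // v ∈ V1} → Bool) × ({v // v ∈ V2} → Bool) // bres hM1 p.1 = bres hM2 p.2} ≃
      ({v // v ∈ V1 ∪ V2} → Bool) where
  toFun p := glue p.1.1 p.1.2
  invFun x := ⟨(bres Finset.subset_union_left x, bres Finset.subset_union_right x), rfl⟩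
  left_inv p := Subtype.ext (Prod.ext (bres_glue_left _ _) (bres_glue_right hM hM1 hM2 p.2))
  right_inv := glue_bres

theorem sum_agree_eq_sum_union {β : Type*} [AddCommMonoid β]
    (hM : V1 ∩ V2 ⊆ M) (hM1 : M ⊆ V1) (hM2 : M ⊆ V2)
    (f : ({v // v ∈ V1} → Bool) → ({v // v ∈ V2} → Bool) → β) :
    (∑ x1, ∑ x2, if bres hM1 x1 = bres hM2 x2 then f x1 x2 else 0) =
      ∑ x, f (bres Finset.subset_union_left x) (bres Finset.subset_union_right x) := by
  rw [← Fintype.sum_prod_type', ← Finset.sum_filter,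
    Finset.sum_subtype (p := fun p => bres hM1 p.1 = bres hM2 p.2) _
      (fun p => by simp only [Finset.mem_filter, Finset.mem_univ, true_and])]
  exact (Fintype.sum_equiv (glueEquiv hM hM1 hM2).symm _ _ fun _ => rfl).symm

end BitStrings

theorem qfe_comp_general {V : Type} [DecidableEq V]
    (V1 V2 M I1 O2 : Finset V)
    (hM : V1 ∩ V2 = M) (hI1 : I1 ⊆ V1) (hO2 : O2 ⊆ V2)
    (hM1 : M ⊆ V1) (hM2 : M ⊆ V2)
    (C1 C2 : ℂ)
    (Q1 : ({v // v ∈ V1} → Bool) → ℝ) (Q2 : ({v // v ∈ V2} → Bool) → ℝ) :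
    qfe hM2 hO2 C2 Q2 * qfe hI1 hM1 C1 Q1 =
      qfe (W := V1 ∪ V2)
        (hI1.trans Finset.subset_union_left)
        (hO2.trans Finset.subset_union_right)
        (C1 * C2)
        (fun x => Q1 (bres Finset.subset_union_left x) +
                  Q2 (bres Finset.subset_union_right x)) := by
  simp only [qfe_eq_sum_single, Matrix.smul_mul, Matrix.mul_smul, smul_smul, mul_inv]
  congr 1
  simp only [Matrix.sum_mul, Matrix.mul_sum, Matrix.single_mul_single_eq_ite,
    eq_comm (a := bres hM2 _)]
  rw [sum_agree_eq_sum_union hM.le hM1 hM2]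
  refine Finset.sum_congr rfl fun x _ => ?_
  rw [bres_bres, bres_bres, ← Complex.exp_add, ← mul_add, add_comm, ← Complex.ofReal_add]

/-- Composition of quadratic form expansions, when `V₁ ∩ V₂ = O₁ = I₂ = M`. -/
theorem qfe_comp {V : Type} [DecidableEq V] [Fintype V]
    (V1 V2 M I1 O2 : Finset V)
    (hM : V1 ∩ V2 = M) (hI1 : I1 ⊆ V1) (hO2 : O2 ⊆ V2)
    (hM1 : M ⊆ V1) (hM2 : M ⊆ V2)
    (C1 C2 : ℂ) (hC1 : C1 ≠ 0) (hC2 : C2 ≠ 0)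
    (Q1 : ({v // v ∈ V1} → Bool) → ℝ) (Q2 : ({v // v ∈ V2} → Bool) → ℝ) :
    qfe hM2 hO2 C2 Q2 * qfe hI1 hM1 C1 Q1 =
      qfe (W := V1 ∪ V2)
        (hI1.trans Finset.subset_union_left)
        (hO2.trans Finset.subset_union_right)
        (C1 * C2)
        (fun x => Q1 (bres Finset.subset_union_left x) +
                  Q2 (bres Finset.subset_union_right x)) :=
  qfe_comp_general V1 V2 M I1 O2 hM hI1 hO2 hM1 hM2 C1 C2 Q1 Q2
end

section
/- Every $2\times 2$ special unitary matrix can be written as a product of matrices of the form $J(\alpha) = \frac{1}{\sqrt{2}}\begin{pmatrix} 1 & e^{i\alpha} \\ 1 & -e^{i\alpha}\end{pmatrix}$ with $\alpha \in \mathbb{R}$, up to a global phase. Concretely, for every $U \in SU(2)$ there exist $\alpha, \beta, \gamma, \delta \in \mathbb{R}$ and $\phi \in \mathbb{R}$ such that $U = e^{i\phi} J(0) J(\alpha) J(\beta) J(\gamma)$. -/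
open Matrix

/-- The operator `J(α) = (1/√2) [[1, e^{iα}], [1, -e^{iα}]]`. -/
noncomputable def Jmat (α : ℝ) : Matrix (Fin 2) (Fin 2) ℂ :=
  (((Real.sqrt 2 : ℝ) : ℂ))⁻¹ •
    !![1, Complex.exp (Complex.I * α); 1, -Complex.exp (Complex.I * α)]

/-!
Writing `H = J(0)`, we have `J(α) = H · diag(1, e^{iα})` and `H² = 1`, so
`J(0) J(α) J(β) J(γ) = diag(1, e^{iα}) · (H diag(1, e^{iβ}) H) · diag(1, e^{iγ})`, and for
`β = 2t` the middle factor is `e^{it}` times the rotation `[[cos t, -i sin t], [-i sin t, cos t]]`.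
A matrix in `SU(2)` has the form `[[a, b], [-b̄, ā]]` with `|a|² + |b|² = 1`, so
`a = cos t · u` and `b = sin t · v` with `|u| = |v| = 1`; the phases `e^{iα}`, `e^{iγ}` and the
global phase are then chosen to match `u` and `v`.
-/

open Complex ComplexConjugate

theorem Matrix.eq_of_mem_specialUnitaryGroup_fin_two {R : Type*} [CommRing R] [StarRing R]
    {U : Matrix (Fin 2) (Fin 2) R} (hU : U ∈ specialUnitaryGroup (Fin 2) R) :
    U = !![U 0 0, U 0 1; -star (U 0 1), star (U 0 0)] := by
  obtain ⟨hunit, hdet⟩ := mem_specialUnitaryGroup_iff.1 hU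
  have hstar : star U = U.adjugate := by
    calc star U = star U * (U * U.adjugate) := by rw [mul_adjugate, hdet, one_smul, mul_one]
      _ = U.adjugate := by rw [← mul_assoc, hunit.1, one_mul]
  have h := congrArg star hstar
  rw [star_star] at h
  ext i j
  fin_cases i <;> fin_cases j
  · rfl
  · rfl
  · simpa [adjugate_fin_two] using congrFun₂ h 1 0
  · simpa [adjugate_fin_two] using congrFun₂ h 1 1

theorem Matrix.sum_norm_sq_of_mem_unitaryGroup {𝕜 n : Type*} [RCLike 𝕜] [Fintype n]
    [DecidableEq n] {U : Matrix n n 𝕜} (hU : U ∈ unitaryGroup n 𝕜) (i : n) :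
    ∑ j, ‖U i j‖ ^ 2 = 1 := by
  have h : (U * Uᴴ) i i = ((∑ j, ‖U i j‖ ^ 2 : ℝ) : 𝕜) := by
    simp only [mul_apply, conjTranspose_apply, ← starRingEnd_apply, RCLike.mul_conj]
    norm_cast
  rw [← star_eq_conjTranspose, Unitary.mul_star_self_of_mem hU, one_apply_eq] at h
  exact_mod_cast h.symm

theorem Complex.exists_exp_I_mul_eq {z : ℂ} (hz : ‖z‖ = 1) : ∃ θ : ℝ, exp (I * θ) = z :=
  ⟨arg z, by simpa [hz, mul_comm] using norm_mul_exp_arg_mul_I z⟩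

theorem Complex.exists_eq_cos_mul_and_eq_sin_mul {a b : ℂ} (h : ‖a‖ ^ 2 + ‖b‖ ^ 2 = 1) :
    ∃ t : ℝ, ∃ u v : ℂ, ‖u‖ = 1 ∧ ‖v‖ = 1 ∧ a = Real.cos t * u ∧ b = Real.sin t * v := by
  have ha : ‖a‖ ≤ 1 := by nlinarith [norm_nonneg a, norm_nonneg b]
  refine ⟨Real.arccos ‖a‖, exp (arg a * I), exp (arg b * I), by simp, by simp, ?_, ?_⟩
  · rw [Real.cos_arccos (by linarith [norm_nonneg a]) ha, norm_mul_exp_arg_mul_I]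
  · rw [Real.sin_arccos, show 1 - ‖a‖ ^ 2 = ‖b‖ ^ 2 by linarith, Real.sqrt_sq (norm_nonneg b),
      norm_mul_exp_arg_mul_I]

theorem Jmat_eq_Jmat_zero_mul_diagonal (α : ℝ) :
    Jmat α = Jmat 0 * diagonal ![1, exp (I * α)] := by
  ext i j
  fin_cases i <;> fin_cases j <;> simp [Jmat]

theorem Jmat_zero_mul_diagonal_mul_Jmat_zero (t : ℝ) :
    Jmat 0 * diagonal ![1, exp (I * ↑(2 * t))] * Jmat 0 =
      exp (I * t) • !![(Real.cos t : ℂ), -I * Real.sin t; -I * Real.sin t, Real.cos t] := by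
  have hX : exp (I * t) = Real.cos t + Real.sin t * I := by
    rw [mul_comm, exp_mul_I, ofReal_cos, ofReal_sin]
  have htwo : exp (I * ↑(2 * t)) = exp (I * t) ^ 2 := by
    rw [sq, ← exp_add]
    push_cast
    ring_nf
  have hpyth : (Real.sin t : ℂ) ^ 2 + (Real.cos t : ℂ) ^ 2 = 1 := by
    exact_mod_cast Real.sin_sq_add_cos_sq t
  have hinv : ((Real.sqrt 2 : ℝ) : ℂ)⁻¹ ^ 2 = 2⁻¹ := by
    rw [inv_pow, ← ofReal_pow, Real.sq_sqrt zero_le_two, ofReal_ofNat]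
  rw [htwo, hX]
  ext i j
  fin_cases i <;> fin_cases j <;>
    simp only [Jmat, ofReal_zero, mul_zero, exp_zero, smul_of, smul_cons, smul_empty, smul_eq_mul,
      Matrix.smul_apply, mul_apply, Fin.sum_univ_two, vecMul_diagonal, cons_mul, empty_mul,
      Equiv.symm_apply_apply, of_apply, cons_val', cons_val_zero, cons_val_one, cons_val_fin_one,
      Fin.isValue, Fin.zero_eta, Fin.mk_one] <;>
    grind [I_sq]

theorem Jmat_zero_mul_self : Jmat 0 * Jmat 0 = 1 := by
  have h := Jmat_zero_mul_diagonal_mul_Jmat_zero 0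
  have hdiag : diagonal ![(1 : ℂ), 1] = 1 := by
    ext i j
    fin_cases i <;> fin_cases j <;> rfl
  simpa [hdiag, ← one_fin_two] using h

theorem Jmat_zero_mul_Jmat_mul_Jmat_mul_Jmat (α t γ : ℝ) :
    Jmat 0 * Jmat α * Jmat (2 * t) * Jmat γ = diagonal ![1, exp (I * α)] *
      (exp (I * t) • !![(Real.cos t : ℂ), -I * Real.sin t; -I * Real.sin t, Real.cos t]) *
        diagonal ![1, exp (I * γ)] := by
  rw [← Jmat_zero_mul_diagonal_mul_Jmat_zero, Jmat_eq_Jmat_zero_mul_diagonal α,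
    Jmat_eq_Jmat_zero_mul_diagonal (2 * t), Jmat_eq_Jmat_zero_mul_diagonal γ]
  simp only [← mul_assoc, Jmat_zero_mul_self, one_mul]

/-- Every `U ∈ SU(2)` can be written, up to a global phase, as `J(0) J(α) J(β) J(γ)`. -/
theorem su2_J_decomposition (U : Matrix (Fin 2) (Fin 2) ℂ)
    (hU : U ∈ Matrix.unitaryGroup (Fin 2) ℂ) (hdet : U.det = 1) :
    ∃ α β γ δ φ : ℝ,
      U = Complex.exp (Complex.I * φ) • (Jmat 0 * Jmat α * Jmat β * Jmat γ) := by
  have hnorm : ‖U 0 0‖ ^ 2 + ‖U 0 1‖ ^ 2 = 1 := by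
    simpa [Fin.sum_univ_two] using sum_norm_sq_of_mem_unitaryGroup hU 0
  obtain ⟨t, u, v, hu, hv, ha, hb⟩ := exists_eq_cos_mul_and_eq_sin_mul hnorm
  obtain ⟨α, hα⟩ := exists_exp_I_mul_eq (z := -I * conj u * conj v) (by simp [hu, hv])
  obtain ⟨γ, hγ⟩ := exists_exp_I_mul_eq (z := I * v * conj u) (by simp [hu, hv])
  obtain ⟨φ, hφ⟩ := exists_exp_I_mul_eq (z := u * conj (exp (I * t))) (by simp [hu])
  refine ⟨α, 2 * t, γ, 0, φ, ?_⟩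
  rw [Jmat_zero_mul_Jmat_mul_Jmat_mul_Jmat, hα, hγ, hφ,
    eq_of_mem_specialUnitaryGroup_fin_two (mem_specialUnitaryGroup_iff.2 ⟨hU, hdet⟩), ha, hb]
  have hX : conj (exp (I * t)) * exp (I * t) = 1 := by
    rw [conj_mul', norm_exp_I_mul_ofReal, ofReal_one, one_pow]
  have hu' : u * conj u = 1 := by rw [mul_conj', hu, ofReal_one, one_pow]
  have hv' : v * conj v = 1 := by rw [mul_conj', hv, ofReal_one, one_pow]
  ext i j
  fin_cases i <;> fin_cases j <;>
    simp only [star_mul', RCLike.star_def, conj_ofReal, Fin.zero_eta, Fin.mk_one, Fin.isValue,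
      of_apply, cons_val', cons_val_zero, cons_val_one, cons_val_fin_one, smul_of, smul_cons,
      smul_eq_mul, smul_empty, Matrix.smul_apply, mul_diagonal, diagonal_mul] <;>
    grind [I_sq]
end

section
/- Let $(G, I, O)$ be a geometry with $|I| = |O|$ and suppose $(f, \preceq)$ and $(f', \preceq')$ are both flows for $(G, I, O)$. Then $f = f'$ (the flow function is unique). -/
/-!
A flow function `f` is injective on `Oᶜ`: if `f u = f w` with `u ≠ w`, condition (iii) gives
both `u ≺ w` and `w ≺ u`. Since it maps `Oᶜ` into `Iᶜ` and `|Iᶜ| = |Oᶜ|`, it is a bijection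
`Oᶜ → Iᶜ`. Now if `f u ≠ f' u`, let `u'` be the preimage of `f u` under `f'`. Then `u' ≠ u` is a
neighbour of `f u`, so `u ≺ u'`, and `f u' ≠ f u = f' u'` by injectivity of `f`. Thus every
vertex where the flows disagree is strictly below another one, which is impossible in a finite
partial order.
-/

variable {V : Type}

/-- `(f, r)` is a flow for the geometry `(G, I, O)`: for every `u ∉ O`,
`f u ∉ I`, `u` is adjacent to `f u`, `u ≺ f u`, and `u ≺ v` for every
neighbor `v ≠ u` of `f u` (where `≺` is the strict order of `r`). -/
def IsFlow (G : SimpleGraph V) (I O : Finset V) (f : V → V) (r : V → V → Prop) : Prop :=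
  ∀ u ∉ O, f u ∉ I ∧ G.Adj u (f u) ∧ (r u (f u) ∧ u ≠ f u) ∧
    ∀ v, G.Adj (f u) v → v ≠ u → r u v ∧ u ≠ v

theorem Finite.forall_not_of_forall_exists_strict_gt [Finite V] {r : V → V → Prop}
    (hr : IsPartialOrder V r) {p : V → Prop} (h : ∀ u, p u → ∃ v, p v ∧ r u v ∧ u ≠ v) :
    ∀ u, ¬ p u := by
  let gt : V → V → Prop := fun a b => r b a ∧ b ≠ a
  have : IsTrans V gt := ⟨fun a b c ⟨hba, hba'⟩ ⟨hcb, _⟩ =>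
    ⟨hr.trans _ _ _ hcb hba, fun hca => hba' (hr.antisymm _ _ hba (hca ▸ hcb))⟩⟩
  have : Std.Irrefl gt := ⟨fun _ h => h.2 rfl⟩
  intro u hu
  obtain ⟨m, hm, hmin⟩ := (Finite.wellFounded_of_trans_of_irrefl gt).has_min {u | p u} ⟨u, hu⟩
  obtain ⟨v, hv, hmv⟩ := h m hm
  exact hmin v hv hmv

namespace IsFlow

variable {G : SimpleGraph V} {I O : Finset V} {f : V → V} {r : V → V → Prop}

theorem mapsTo (hf : IsFlow G I O f r) : Set.MapsTo f (↑O)ᶜ (↑I)ᶜ :=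
  fun u hu => (hf u hu).1

theorem injOn (hr : Std.Antisymm r) (hf : IsFlow G I O f r) : Set.InjOn f (↑O)ᶜ := by
  intro u hu w hw hfuw
  by_contra hne
  have huw := (hf u hu).2.2.2 w (hfuw ▸ (hf w hw).2.1.symm) (Ne.symm hne)
  have hwu := (hf w hw).2.2.2 u (hfuw ▸ (hf u hu).2.1.symm) hne
  exact hne (hr.antisymm _ _ huw.1 hwu.1)

theorem surjOn [Fintype V] [DecidableEq V] (hcard : I.card = O.card) (hr : Std.Antisymm r)
    (hf : IsFlow G I O f r) : Set.SurjOn f (↑O)ᶜ (↑I)ᶜ := by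
  have := Finset.surjOn_of_injOn_of_card_le (s := Oᶜ) (t := Iᶜ) f
    (by simpa using hf.mapsTo) (by simpa using hf.injOn hr) (by simp [Finset.card_compl, hcard])
  simpa using this

theorem exists_strict_gt_of_ne {f' : V → V} {r' : V → V → Prop} (hr : Std.Antisymm r)
    (hf : IsFlow G I O f r) (hf' : IsFlow G I O f' r') (hsurj : Set.SurjOn f' (↑O)ᶜ (↑I)ᶜ)
    {u : V} (hu : u ∉ O) (hne : f u ≠ f' u) :
    ∃ u', (u' ∉ O ∧ f u' ≠ f' u') ∧ r u u' ∧ u ≠ u' := by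
  obtain ⟨u', hu', hfu'⟩ := hsurj (hf.mapsTo hu)
  have hu'u : u' ≠ u := by
    rintro rfl
    exact hne hfu'.symm
  have hlt := (hf u hu).2.2.2 u' (hfu' ▸ (hf' u' hu').2.1.symm) hu'u
  exact ⟨u', ⟨hu', fun h => hu'u (hf.injOn hr hu' hu (h.trans hfu'))⟩, hlt⟩

end IsFlow

/-- Uniqueness of the flow function for geometries with `|I| = |O|` ([Beau06]). -/
theorem flow_unique [Fintype V] [DecidableEq V]
    (G : SimpleGraph V) (I O : Finset V) (hcard : I.card = O.card)
    (f f' : V → V) (r r' : V → V → Prop)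
    (hr : IsPartialOrder V r) (hr' : IsPartialOrder V r')
    (hf : IsFlow G I O f r) (hf' : IsFlow G I O f' r') :
    ∀ u ∉ O, f u = f' u := by
  have hsurj := hf'.surjOn hcard hr'.toAntisymm
  intro u hu
  by_contra hne
  exact Finite.forall_not_of_forall_exists_strict_gt hr (p := fun u => u ∉ O ∧ f u ≠ f' u)
    (fun v hv => hf.exists_strict_gt_of_ne hr.toAntisymm hf' hsurj hv.1 hv.2) u ⟨hu, hne⟩
end
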